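/- arXiv:2602.13149 — 2 statements merged into one kernel-verified Lean document; each statement's English description precedes it below -/
import Mathlib

section
/- If H_i is a connected hypergraph containing at least one non-singleton hyperedge, and B_i is a nonempty lazy burning set of H_i, then for any vertex v ∈ B_i and any non-singleton hyperedge h containing v, the set B_i ∪ E(H_i) \ {h} is a zero forcing set of the incidence graph IG(H_i); in particular, Z(IG(H_i)) ≤ b_L(H_i) + |E(H_i)| − 1. -/
/-- Zero forcing closure: vertices eventually colored blue. -/
inductive SimpleGraph.Forced {V : Type*} (G : SimpleGraph V) (B : Set V) : V → Prop
  | init (v : V) (hv : v ∈ B) : SimpleGraph.Forced G B v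
  | force (v w : V) (hv : SimpleGraph.Forced G B v) (hadj : G.Adj v w)
      (hall : ∀ u, G.Adj v u → u ≠ w → SimpleGraph.Forced G B u) : SimpleGraph.Forced G B w

def SimpleGraph.IsZeroForcingSet {V : Type*} (G : SimpleGraph V) (B : Set V) : Prop :=
  ∀ v, G.Forced B v

noncomputable def SimpleGraph.zeroForcingNumber {V : Type*} (G : SimpleGraph V) : ℕ :=
  sInf {n | ∃ B : Set V, B.ncard = n ∧ G.IsZeroForcingSet B}

/-- closed ball of radius r -/
def SimpleGraph.closedBall {V : Type*} (G : SimpleGraph V) (v : V) (r : ℕ) : Set V :=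
  {w | G.edist v w ≤ (r : ℕ∞)}

/-- Burning sequence (alternative characterization). -/
def SimpleGraph.IsBurningSeq {V : Type*} (G : SimpleGraph V) {k : ℕ} (s : Fin k → V) : Prop :=
  (∀ i j : Fin k, i ≠ j →
      ((((i : ℕ) : ℤ) - ((j : ℕ) : ℤ)).natAbs : ℕ∞) ≤ G.edist (s i) (s j)) ∧
  (⋃ l : Fin k, G.closedBall (s l) (k - 1 - (l : ℕ))) = Set.univ

noncomputable def SimpleGraph.burningNumber {V : Type*} (G : SimpleGraph V) : ℕ :=
  sInf {k | ∃ s : Fin k → V, G.IsBurningSeq s}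

/-- Strong product of graphs. -/
def SimpleGraph.strongProd {α β : Type*} (G : SimpleGraph α) (H : SimpleGraph β) :
    SimpleGraph (α × β) where
  Adj x y := (x.1 = y.1 ∧ H.Adj x.2 y.2) ∨ (x.2 = y.2 ∧ G.Adj x.1 y.1) ∨
    (G.Adj x.1 y.1 ∧ H.Adj x.2 y.2)
  symm := ⟨by
    rintro ⟨a, b⟩ ⟨c, d⟩ (⟨h1, h2⟩ | ⟨h1, h2⟩ | ⟨h1, h2⟩)
    · exact Or.inl ⟨h1.symm, h2.symm⟩
    · exact Or.inr (Or.inl ⟨h1.symm, h2.symm⟩)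
    · exact Or.inr (Or.inr ⟨h1.symm, h2.symm⟩)⟩
  loopless := ⟨by
    rintro ⟨a, b⟩ (⟨_, h2⟩ | ⟨_, h2⟩ | ⟨h1, _⟩)
    exacts [H.loopless.irrefl b h2, G.loopless.irrefl a h2, G.loopless.irrefl a h1]⟩

instance {α β : Type*} (G : SimpleGraph α) (H : SimpleGraph β)
    [DecidableEq α] [DecidableEq β] [DecidableRel G.Adj] [DecidableRel H.Adj] :
    DecidableRel (G.strongProd H).Adj :=
  fun _ _ => inferInstanceAs (Decidable (_ ∨ _ ∨ _))

section Hypergraph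
variable {V : Type*} [DecidableEq V]

/-- Lazy burning closure on a hypergraph given by its edge set. -/
inductive LazyBurned (E : Finset (Finset V)) (B : Set V) : V → Prop
  | init (v : V) (hv : v ∈ B) : LazyBurned E B v
  | spread (v : V) (h : Finset V) (hE : h ∈ E) (hcard : 2 ≤ h.card) (hv : v ∈ h)
      (hall : ∀ u ∈ h, u ≠ v → LazyBurned E B u) : LazyBurned E B v

def IsLazyBurningSet (E : Finset (Finset V)) (B : Set V) : Prop := ∀ v, LazyBurned E B v

noncomputable def lazyBurningNumber (E : Finset (Finset V)) : ℕ :=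
  sInf {n | ∃ B : Set V, B.ncard = n ∧ IsLazyBurningSet E B}

/-- one round of propagation in hypergraph burning -/
def hSpread (E : Finset (Finset V)) (S : Set V) : Set V :=
  S ∪ {v | ∃ h ∈ E, 2 ≤ h.card ∧ v ∈ h ∧ ∀ u ∈ h, u ≠ v → u ∈ S}

/-- burned vertices after t rounds of the (round-based) hypergraph burning process -/
def hBurnedAt (E : Finset (Finset V)) {k : ℕ} (s : Fin k → V) : ℕ → Set V
  | 0 => ∅
  | t + 1 => hSpread E (hBurnedAt E s t) ∪ {v | ∃ ht : t < k, v = s ⟨t, ht⟩}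

noncomputable def hBurningNumber (E : Finset (Finset V)) : ℕ :=
  sInf {k | ∃ s : Fin k → V,
    (∀ t : Fin k, s t ∉ hBurnedAt E s (t : ℕ)) ∧ hBurnedAt E s k = Set.univ}

/-- incidence graph of a hypergraph -/
def IG (E : Finset (Finset V)) : SimpleGraph (V ⊕ {h // h ∈ E}) where
  Adj x y := (∃ v h, x = Sum.inl v ∧ y = Sum.inr h ∧ v ∈ (h : Finset V)) ∨
    (∃ v h, x = Sum.inr h ∧ y = Sum.inl v ∧ v ∈ (h : Finset V))
  symm := ⟨by
    rintro x y (⟨v, h, rfl, rfl, hm⟩ | ⟨v, h, rfl, rfl, hm⟩)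
    · exact Or.inr ⟨v, h, rfl, rfl, hm⟩
    · exact Or.inl ⟨v, h, rfl, rfl, hm⟩⟩
  loopless := ⟨by
    rintro x (⟨v, h, rfl, he, hm⟩ | ⟨v, h, rfl, he, hm⟩) <;> simp at he⟩

/-- connectivity relation of a hypergraph -/
def hconn (E : Finset (Finset V)) : V → V → Prop :=
  Relation.ReflTransGen (fun u v => ∃ h ∈ E, u ∈ h ∧ v ∈ h)

end Hypergraph

/-!
Colour blue every vertex of `B` and every hyperedge except `h`. Each lazy-burning step, a
hyperedge `e` all of whose vertices but `w` are burned, becomes a forcing step `e → w` in the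
incidence graph as soon as `e` is blue: every neighbour of `e` other than `w` is then blue. The
only hyperedge not blue from the start is `h`; it is forced by any of its blue vertices, since
all the other hyperedges are blue. As `h` has a second vertex, `h` is blue by the time any
lazy-burning step through `h` is needed.
-/

lemma SimpleGraph.IsZeroForcingSet.zeroForcingNumber_le_ncard {V : Type*} {G : SimpleGraph V}
    {S : Set V} (hS : G.IsZeroForcingSet S) : G.zeroForcingNumber ≤ S.ncard :=
  Nat.sInf_le ⟨S, rfl, hS⟩

section IncidenceGraph

variable {V : Type*} {E : Finset (Finset V)}

@[simp]
lemma IG_adj_inl_inr {v : V} {e : {x // x ∈ E}} :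
    (IG E).Adj (Sum.inl v) (Sum.inr e) ↔ v ∈ (e : Finset V) := by
  simp [IG]

@[simp]
lemma IG_adj_inr_inl {v : V} {e : {x // x ∈ E}} :
    (IG E).Adj (Sum.inr e) (Sum.inl v) ↔ v ∈ (e : Finset V) := by
  simp [IG]

@[simp]
lemma IG_not_adj_inl_inl {v w : V} : ¬ (IG E).Adj (Sum.inl v) (Sum.inl w) := by
  simp [IG]

@[simp]
lemma IG_not_adj_inr_inr {e f : {x // x ∈ E}} : ¬ (IG E).Adj (Sum.inr e) (Sum.inr f) := by
  simp [IG]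

variable {Z : Set (V ⊕ {x // x ∈ E})}

lemma IG_forced_inl_of_forced_inr {e : {x // x ∈ E}} {w : V} (hw : w ∈ (e : Finset V))
    (he : (IG E).Forced Z (Sum.inr e))
    (hrest : ∀ u ∈ (e : Finset V), u ≠ w → (IG E).Forced Z (Sum.inl u)) :
    (IG E).Forced Z (Sum.inl w) := by
  refine .force _ _ he (IG_adj_inr_inl.2 hw) ?_
  rintro (u | f) hadj hne
  · exact hrest u (IG_adj_inr_inl.1 hadj) (fun huw => hne (huw ▸ rfl))
  · exact absurd hadj IG_not_adj_inr_inr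

lemma IG_forced_inr_of_forced_inl {e : {x // x ∈ E}} {w : V} (hw : w ∈ (e : Finset V))
    (hwZ : (IG E).Forced Z (Sum.inl w))
    (hrest : ∀ f : {x // x ∈ E}, w ∈ (f : Finset V) → f ≠ e →
      (IG E).Forced Z (Sum.inr f)) :
    (IG E).Forced Z (Sum.inr e) := by
  refine .force _ _ hwZ (IG_adj_inl_inr.2 hw) ?_
  rintro (u | f) hadj hne
  · exact absurd hadj IG_not_adj_inl_inl
  · exact hrest f (IG_adj_inl_inr.1 hadj) (fun hfe => hne (hfe ▸ rfl))

lemma IG_forced_inr_of_forced_inl_of_others_mem {h : Finset V}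
    (hedges : ∀ e : {x // x ∈ E}, (e : Finset V) ≠ h → Sum.inr e ∈ Z)
    {e : {x // x ∈ E}} (heh : (e : Finset V) = h) {w : V} (hw : w ∈ h)
    (hwZ : (IG E).Forced Z (Sum.inl w)) : (IG E).Forced Z (Sum.inr e) :=
  IG_forced_inr_of_forced_inl (heh ▸ hw) hwZ fun f _ hfe =>
    .init _ (hedges f fun hfh => hfe (Subtype.ext (hfh.trans heh.symm)))

lemma IG_forced_inl_of_lazyBurned [DecidableEq V] {B : Set V} {h : Finset V}
    (hB : Sum.inl '' B ⊆ Z)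
    (hedges : ∀ e : {x // x ∈ E}, (e : Finset V) ≠ h → Sum.inr e ∈ Z)
    {w : V} (hw : LazyBurned E B w) : (IG E).Forced Z (Sum.inl w) := by
  induction hw with
  | init w hw => exact .init _ (hB ⟨w, hw, rfl⟩)
  | spread w e heE hcard hwe _ ih =>
    have he : (IG E).Forced Z (Sum.inr ⟨e, heE⟩) := by
      by_cases heh : e = h
      · obtain ⟨u, hue, huw⟩ := Finset.exists_mem_ne (by omega : 1 < e.card) w
        exact IG_forced_inr_of_forced_inl_of_others_mem hedges heh (heh ▸ hue) (ih u hue huw)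
      · exact .init _ (hedges _ heh)
    exact IG_forced_inl_of_forced_inr hwe he ih

lemma isZeroForcingSet_IG_of_isLazyBurningSet [DecidableEq V] {B : Set V}
    (hB : IsLazyBurningSet E B) {h : Finset V} (hh : h.Nonempty) :
    (IG E).IsZeroForcingSet
      (Sum.inl '' B ∪ Sum.inr '' {e : {x // x ∈ E} | (e : Finset V) ≠ h}) := by
  have hedges : ∀ e : {x // x ∈ E}, (e : Finset V) ≠ h →
      Sum.inr e ∈ Sum.inl '' B ∪ Sum.inr '' {e : {x // x ∈ E} | (e : Finset V) ≠ h} :=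
    fun e he => Or.inr ⟨e, he, rfl⟩
  have hvertex (w : V) := IG_forced_inl_of_lazyBurned Set.subset_union_left hedges (hB w)
  rintro (w | e)
  · exact hvertex w
  · by_cases heh : (e : Finset V) = h
    · obtain ⟨w, hw⟩ := hh
      exact IG_forced_inr_of_forced_inl_of_others_mem hedges heh hw (hvertex w)
    · exact .init _ (hedges e heh)

end IncidenceGraph

lemma exists_isLazyBurningSet_ncard_eq_lazyBurningNumber {V : Type*} [DecidableEq V]
    (E : Finset (Finset V)) :
    ∃ B : Set V, B.ncard = lazyBurningNumber E ∧ IsLazyBurningSet E B :=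
  Nat.sInf_mem (s := {n | ∃ B : Set V, B.ncard = n ∧ IsLazyBurningSet E B})
    ⟨_, Set.univ, rfl, fun v => .init v trivial⟩

lemma ncard_setOf_ne_eq_card_sub_one {V : Type*} {E : Finset (Finset V)} {h : Finset V}
    (hE : h ∈ E) : {e : {x // x ∈ E} | (e : Finset V) ≠ h}.ncard = E.card - 1 := by
  have hset : {e : {x // x ∈ E} | (e : Finset V) ≠ h} = {⟨h, hE⟩}ᶜ := by
    ext e
    simp [Subtype.ext_iff]
  rw [hset, Set.ncard_compl, Set.ncard_singleton, Nat.card_eq_fintype_card, Fintype.card_coe]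

theorem stmt7_general {V : Type*} [DecidableEq V] (E : Finset (Finset V))
    (B : Set V) (hlazy : IsLazyBurningSet E B)
    (h : Finset V) (hE : h ∈ E) (hcard : 2 ≤ h.card) :
    (IG E).IsZeroForcingSet
      (Sum.inl '' B ∪ Sum.inr '' {e : {x // x ∈ E} | (e : Finset V) ≠ h}) ∧
    (IG E).zeroForcingNumber ≤ lazyBurningNumber E + E.card - 1 := by
  have hh : h.Nonempty := Finset.card_pos.mp (by omega)
  refine ⟨isZeroForcingSet_IG_of_isLazyBurningSet hlazy hh, ?_⟩
  obtain ⟨B₀, hB₀card, hB₀⟩ := exists_isLazyBurningSet_ncard_eq_lazyBurningNumber E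
  have hEpos : 0 < E.card := Finset.card_pos.mpr ⟨h, hE⟩
  calc (IG E).zeroForcingNumber
      ≤ (Sum.inl '' B₀ ∪ Sum.inr '' {e : {x // x ∈ E} | (e : Finset V) ≠ h}).ncard :=
        (isZeroForcingSet_IG_of_isLazyBurningSet hB₀ hh).zeroForcingNumber_le_ncard
    _ ≤ (Sum.inl '' B₀).ncard +
          (Sum.inr '' {e : {x // x ∈ E} | (e : Finset V) ≠ h}).ncard :=
        Set.ncard_union_le _ _
    _ = lazyBurningNumber E + E.card - 1 := by
        rw [Set.ncard_image_of_injective _ Sum.inl_injective,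
          Set.ncard_image_of_injective _ Sum.inr_injective, hB₀card,
          ncard_setOf_ne_eq_card_sub_one hE]
        omega

/-- For a connected hypergraph with a non-singleton hyperedge and a nonempty lazy burning set
`B`, removing from `B ∪ E(H)` any non-singleton hyperedge containing a vertex of `B` still
yields a zero forcing set of the incidence graph; hence `Z(IG(H)) ≤ b_L(H) + |E(H)| - 1`. -/
theorem stmt7 {V : Type*} [Fintype V] [DecidableEq V] (E : Finset (Finset V))
    (hconnected : ∀ u v : V, hconn E u v)
    (B : Set V) (hBne : B.Nonempty) (hlazy : IsLazyBurningSet E B)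
    (v : V) (hvB : v ∈ B) (h : Finset V) (hE : h ∈ E) (hcard : 2 ≤ h.card) (hvh : v ∈ h) :
    (IG E).IsZeroForcingSet
      (Sum.inl '' B ∪ Sum.inr '' {e : {x // x ∈ E} | (e : Finset V) ≠ h}) ∧
    (IG E).zeroForcingNumber ≤ lazyBurningNumber E + E.card - 1 :=
  stmt7_general E B hlazy h hE hcard
end

section
/- Let G be a graph, n ≥ 2, and suppose (w_1, ..., w_l) with w_j = (v_j, u_{m_j}) is a burning sequence for G ⊠ K_n. Then (v_1, ..., v_{l−1}) together with v_l covers G in the sense that ∪_{j=1}^{l−1} N_{l−j}[v_j] = V(G); in particular b(G ⊠ K_n) ≥ b(G) whenever G admits such a structure, i.e., b(G ⊠ K_n) cannot be strictly less than b(G). -/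
open Set

namespace SimpleGraph

variable {α β : Type*} {G : SimpleGraph α} {k : ℕ}

lemma mem_closedBall_zero {v w : α} : w ∈ G.closedBall v 0 ↔ w = v := by
  show G.edist v w ≤ ((0 : ℕ) : ℕ∞) ↔ w = v
  rw [Nat.cast_zero, nonpos_iff_eq_zero, edist_eq_zero_iff, eq_comm]

lemma closedBall_mono {v : α} {r s : ℕ} (h : r ≤ s) : G.closedBall v r ⊆ G.closedBall v s :=
  fun _ (hw : G.edist v _ ≤ r) => hw.trans (Nat.cast_le.mpr h)

lemma closedBall_subset_closedBall_add {v w : α} {r s : ℕ} (h : w ∈ G.closedBall v r) :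
    G.closedBall w s ⊆ G.closedBall v (r + s) := fun u hu =>
  calc G.edist v u ≤ G.edist v w + G.edist w u := G.edist_triangle
    _ ≤ r + s := add_le_add h hu
    _ = ((r + s : ℕ) : ℕ∞) := by push_cast; rfl

variable (G) in
/-- The vertices on fire just before round `t` when the fires are lit at `x 0, x 1, …`. -/
def burnedBefore (x : Fin k → α) (t : ℕ) : Set α :=
  ⋃ (i : Fin k) (_ : (i : ℕ) < t), G.closedBall (x i) (t - 1 - i)

lemma burnedBefore_length (x : Fin k → α) :
    G.burnedBefore x k = ⋃ i : Fin k, G.closedBall (x i) (k - 1 - i) := by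
  simp [burnedBefore]

lemma burnedBefore_congr {x y : Fin k → α} {t : ℕ} (h : ∀ i : Fin k, (i : ℕ) < t → x i = y i) :
    G.burnedBefore x t = G.burnedBefore y t := by
  unfold burnedBefore
  refine iUnion_congr fun i => iUnion_congr_Prop Iff.rfl fun hi => ?_
  rw [h i hi]

lemma burnedBefore_comp_castLE {m : ℕ} (hmk : m ≤ k) (x : Fin k → α) {t : ℕ} (ht : t ≤ m) :
    G.burnedBefore (x ∘ Fin.castLE hmk) t = G.burnedBefore x t := by
  ext w
  simp only [burnedBefore, mem_iUnion, Function.comp_apply]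
  constructor
  · rintro ⟨i, hi, hw⟩
    exact ⟨_, hi, hw⟩
  · rintro ⟨i, hi, hw⟩
    exact ⟨⟨i, by omega⟩, hi, hw⟩

lemma le_edist_of_notMem_burnedBefore {x : Fin k → α} {i j : Fin k} (hij : i < j)
    (hj : x j ∉ G.burnedBefore x j) : ((j - i : ℕ) : ℕ∞) ≤ G.edist (x i) (x j) := by
  have hlt : ((j - 1 - i : ℕ) : ℕ∞) < G.edist (x i) (x j) :=
    lt_of_not_ge fun hle => hj (mem_biUnion (x := i) hij hle)
  have : (j - i : ℕ) = (j - 1 - i : ℕ) + 1 := by have : (i : ℕ) < j := hij; omega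
  rw [this, Nat.cast_add, Nat.cast_one]
  exact Order.add_one_le_of_lt hlt

lemma isBurningSeq_of_forall_notMem_burnedBefore {x : Fin k → α}
    (hx : ∀ j : Fin k, x j ∉ G.burnedBefore x j) (hcov : G.burnedBefore x k = univ) :
    G.IsBurningSeq x := by
  refine ⟨fun i j hij => ?_, burnedBefore_length x ▸ hcov⟩
  rcases lt_or_gt_of_ne hij with h | h
  · convert le_edist_of_notMem_burnedBefore h (hx j) using 2
    have : (i : ℕ) < j := h; omega
  · rw [edist_comm]
    convert le_edist_of_notMem_burnedBefore h (hx i) using 2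
    have : (j : ℕ) < i := h; omega

lemma burnedBefore_subset_update {x : Fin k → α} {j : Fin k} (hj : x j ∈ G.burnedBefore x j)
    (v : α) (t : ℕ) : G.burnedBefore x t ⊆ G.burnedBefore (Function.update x j v) t := by
  intro w hw
  simp only [burnedBefore, mem_iUnion] at hw hj ⊢
  obtain ⟨i, hit, hw⟩ := hw
  by_cases hij : i = j
  · subst hij
    obtain ⟨i', hi', hj⟩ := hj
    have hne : i' ≠ i := Fin.ne_of_lt hi'
    refine ⟨i', by omega, ?_⟩
    rw [Function.update_of_ne hne]
    exact closedBall_mono (by omega) (closedBall_subset_closedBall_add hj hw)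
  · exact ⟨i, hit, by rwa [Function.update_of_ne hij]⟩

lemma burningNumber_le {m : ℕ} {s : Fin m → α} (hs : G.IsBurningSeq s) : G.burningNumber ≤ m :=
  Nat.sInf_le ⟨s, hs⟩

lemma burningNumber_le_or_exists_repair {x : Fin k → α} (hcov : G.burnedBefore x k = univ)
    {t : ℕ} (ht : t < k) (hx : ∀ j : Fin k, (j : ℕ) < t → x j ∉ G.burnedBefore x j) :
    G.burningNumber ≤ t ∨ ∃ y : Fin k → α, G.burnedBefore y k = univ ∧
      ∀ j : Fin k, (j : ℕ) < t + 1 → y j ∉ G.burnedBefore y j := by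
  set jt : Fin k := ⟨t, ht⟩
  by_cases hgood : x jt ∈ G.burnedBefore x t
  swap
  · refine Or.inr ⟨x, hcov, fun j hj => ?_⟩
    rcases Nat.lt_succ_iff_lt_or_eq.mp hj with hj | hj
    · exact hx j hj
    · obtain rfl : j = jt := Fin.ext hj
      exact hgood
  by_cases hall : G.burnedBefore x t = univ
  · left
    refine burningNumber_le (s := x ∘ Fin.castLE ht.le) <|
      isBurningSeq_of_forall_notMem_burnedBefore (fun j => ?_) ?_
    · rw [burnedBefore_comp_castLE _ _ j.isLt.le]
      exact hx (Fin.castLE _ j) j.isLt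
    · rwa [burnedBefore_comp_castLE _ _ le_rfl]
  · obtain ⟨v, hv⟩ := (ne_univ_iff_exists_notMem _).mp hall
    have hprefix : ∀ r ≤ t, G.burnedBefore (Function.update x jt v) r = G.burnedBefore x r :=
      fun r hr => burnedBefore_congr fun i hi =>
        Function.update_of_ne (Fin.ne_of_lt (show i < jt from Nat.lt_of_lt_of_le hi hr)) _ _
    refine Or.inr ⟨Function.update x jt v,
      eq_univ_of_univ_subset (hcov ▸ burnedBefore_subset_update hgood v k), fun j hj => ?_⟩
    rcases Nat.lt_succ_iff_lt_or_eq.mp hj with hj | hj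
    · rw [hprefix _ hj.le, Function.update_of_ne (Fin.ne_of_lt hj)]
      exact hx j hj
    · obtain rfl : j = jt := Fin.ext hj
      rwa [hprefix _ le_rfl, Function.update_self]

theorem burningNumber_le_of_burnedBefore_eq_univ (x : Fin k → α)
    (hx : G.burnedBefore x k = univ) : G.burningNumber ≤ k := by
  suffices h : ∀ t ≤ k, G.burningNumber ≤ k ∨ ∃ y : Fin k → α, G.burnedBefore y k = univ ∧
      ∀ j : Fin k, (j : ℕ) < t → y j ∉ G.burnedBefore y j by
    obtain h | ⟨y, hcov, hy⟩ := h k le_rfl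
    · exact h
    · exact burningNumber_le <|
        isBurningSeq_of_forall_notMem_burnedBefore (fun j => hy j j.isLt) hcov
  intro t ht
  induction t with
  | zero => exact Or.inr ⟨x, hx, fun _ h => absurd h (Nat.not_lt_zero _)⟩
  | succ t ih =>
    obtain h | ⟨y, hcov, hy⟩ := ih (by omega)
    · exact Or.inl h
    · exact (burningNumber_le_or_exists_repair hcov (by omega) hy).imp_left (·.trans (by omega))

lemma edist_le_edist_of_adj_imp {γ : Type*} {H : SimpleGraph γ} (f : α → γ)
    (hf : ∀ a b, G.Adj a b → f a = f b ∨ H.Adj (f a) (f b)) (u v : α) :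
    H.edist (f u) (f v) ≤ G.edist u v := by
  suffices h : ∀ {u v : α} (p : G.Walk u v), H.edist (f u) (f v) ≤ p.length by
    rw [edist_eq_sInf]
    exact le_sInf (by rintro _ ⟨p, rfl⟩; exact h p)
  intro u v p
  induction p with
  | nil => simp [edist_self]
  | cons hadj p ih =>
    calc _ ≤ _ := H.edist_triangle
      _ ≤ 1 + _ := add_le_add (edist_le_one_iff_adj_or_eq.mpr (hf _ _ hadj).symm) ih
      _ = _ := by rw [Walk.length_cons, Nat.cast_add, Nat.cast_one, add_comm]

lemma edist_fst_le_edist_strongProd (H : SimpleGraph β) (a b : α × β) :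
    G.edist a.1 b.1 ≤ (G.strongProd H).edist a b :=
  edist_le_edist_of_adj_imp Prod.fst
    (by rintro _ _ (⟨h, -⟩ | ⟨-, h⟩ | ⟨h, -⟩) <;> simp [h]) a b

lemma burnedBefore_fst_eq_univ [Nonempty β] {H : SimpleGraph β} {l : ℕ} {s : Fin l → α × β}
    (hs : (G.strongProd H).IsBurningSeq s) : G.burnedBefore (Prod.fst ∘ s) l = univ := by
  rw [burnedBefore_length]
  refine eq_univ_of_forall fun v => ?_
  obtain ⟨j, hj⟩ := mem_iUnion.mp (hs.2 ▸ mem_univ (v, Classical.arbitrary β))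
  exact mem_iUnion.mpr ⟨j, (edist_fst_le_edist_strongProd H _ _).trans hj⟩

theorem burningNumber_le_burningNumber_strongProd [Nonempty β] (H : SimpleGraph β)
    (hP : ∃ l, ∃ s : Fin l → α × β, (G.strongProd H).IsBurningSeq s) :
    G.burningNumber ≤ (G.strongProd H).burningNumber := by
  obtain ⟨σ, hσ⟩ := Nat.sInf_mem hP
  exact burningNumber_le_of_burnedBefore_eq_univ _ (burnedBefore_fst_eq_univ hσ)

/-- Only the last fire has radius `0`, and it cannot reach two vertices of the fibre over `v`. -/
lemma exists_lt_pred_mem_closedBall_fst [Nontrivial β] {H : SimpleGraph β} {l : ℕ}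
    {s : Fin l → α × β} (hs : (G.strongProd H).IsBurningSeq s) (v : α) :
    ∃ j : Fin l, (j : ℕ) < l - 1 ∧ v ∈ G.closedBall (s j).1 (l - 1 - j) := by
  by_contra! hv
  have hlast : ∀ c : β, ∃ j : Fin l, (j : ℕ) = l - 1 ∧ (v, c) = s j := by
    intro c
    obtain ⟨j, hj⟩ := mem_iUnion.mp (hs.2 ▸ mem_univ (v, c))
    have hjl : (j : ℕ) = l - 1 := by
      by_contra hne
      exact hv j (by omega) ((edist_fst_le_edist_strongProd H _ _).trans hj)
    rw [hjl, Nat.sub_self, mem_closedBall_zero] at hj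
    exact ⟨j, hjl, hj⟩
  obtain ⟨a, b, hab⟩ := exists_pair_ne β
  obtain ⟨i, hi, hsa⟩ := hlast a
  obtain ⟨j, hj, hsb⟩ := hlast b
  obtain rfl : i = j := Fin.ext (hi.trans hj.symm)
  exact hab (Prod.ext_iff.mp (hsa.trans hsb.symm)).2

end SimpleGraph

theorem stmt15_general {α : Type*} (G : SimpleGraph α) (n : ℕ) (hn : 2 ≤ n) (l : ℕ)
    (s : Fin l → α × Fin n)
    (hs : (G.strongProd (SimpleGraph.completeGraph (Fin n))).IsBurningSeq s) :
    (⋃ j ∈ {j : Fin l | (j : ℕ) < l - 1},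
        G.closedBall ((s j).1) (l - 1 - (j : ℕ))) = Set.univ ∧
    G.burningNumber ≤ (G.strongProd (SimpleGraph.completeGraph (Fin n))).burningNumber := by
  have : Nontrivial (Fin n) := Fin.nontrivial_iff_two_le.mpr hn
  refine ⟨Set.eq_univ_of_forall fun v => ?_,
    G.burningNumber_le_burningNumber_strongProd _ ⟨l, s, hs⟩⟩
  obtain ⟨j, hj, hv⟩ := SimpleGraph.exists_lt_pred_mem_closedBall_fst hs v
  exact Set.mem_biUnion hj hv

/-- For `n ≥ 2`, the first coordinates of any burning sequence of `G ⊠ K_n`, except possibly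
the last, already cover `G`; in particular `b(G ⊠ K_n)` cannot be less than `b(G)`. -/
theorem stmt15 {α : Type*} [Fintype α] (G : SimpleGraph α) (n : ℕ) (hn : 2 ≤ n) (l : ℕ)
    (s : Fin l → α × Fin n)
    (hs : (G.strongProd (SimpleGraph.completeGraph (Fin n))).IsBurningSeq s) :
    (⋃ j ∈ {j : Fin l | (j : ℕ) < l - 1},
        G.closedBall ((s j).1) (l - 1 - (j : ℕ))) = Set.univ ∧
    G.burningNumber ≤ (G.strongProd (SimpleGraph.completeGraph (Fin n))).burningNumber :=
  stmt15_general G n hn l s hs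
end
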